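/- (Eigencircuits of the maximal common-cause indicator.) Let d ≥ 2. A process comb J yields the outcome j with probability 1 under the common-cause indicator with identity unitaries, i.e. (1/d) Tr[J · ((|Φ_j⟩⟨Φ_j|)_{AC} ⊗ I_B)] = 1, if and only if J = |Φ_j⟩⟨Φ_j|_{AC} ⊗ I_B; in particular every eigencircuit of the common-cause indicator prepares a maximally entangled state between A and C, independent of B. -/

import Mathlib

open Matrix BigOperators ComplexOrder

noncomputable section

/-- Index type for the three systems A, B, C. -/
abbrev PIdx (dA dB dC : ℕ) := Fin dA × Fin dB × Fin dC

/-- Matrices on `ℂ^{dA} ⊗ ℂ^{dB} ⊗ ℂ^{dC}`. -/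
abbrev PMat (dA dB dC : ℕ) := Matrix (PIdx dA dB dC) (PIdx dA dB dC) ℂ

/-- Partial trace over the third (C) tensor factor. -/
def trC {dA dB dC : ℕ} (M : PMat dA dB dC) :
    Matrix (Fin dA × Fin dB) (Fin dA × Fin dB) ℂ :=
  Matrix.of fun i j => ∑ c : Fin dC, M (i.1, i.2, c) (j.1, j.2, c)

/-- Partial trace over the second tensor factor of a bipartite matrix. -/
def trSnd {d₁ d₂ : ℕ} (M : Matrix (Fin d₁ × Fin d₂) (Fin d₁ × Fin d₂) ℂ) :
    Matrix (Fin d₁) (Fin d₁) ℂ :=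
  Matrix.of fun a a' => ∑ b : Fin d₂, M (a, b) (a', b)

/-- A process comb: a PSD matrix `J` on A ⊗ B ⊗ C with `Tr_C J = ρ_A ⊗ I_B`
for some state `ρ_A`. -/
def IsProcessComb {dA dB dC : ℕ} (J : PMat dA dB dC) : Prop :=
  J.PosSemidef ∧ ∃ ρ : Matrix (Fin dA) (Fin dA) ℂ,
    ρ.PosSemidef ∧ ρ.trace = 1 ∧
    trC J = Matrix.of fun i j => ρ i.1 j.1 * (if i.2 = j.2 then (1 : ℂ) else 0)

/-- A tester with `m` outcomes: PSD matrices `T x` with `∑ x, T x = Λ ⊗ I_C`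
for some PSD `Λ` on A ⊗ B with `Tr_B Λ = I_A`. -/
def IsTester {dA dB dC m : ℕ} (T : Fin m → PMat dA dB dC) : Prop :=
  (∀ x, (T x).PosSemidef) ∧
  ∃ Λ : Matrix (Fin dA × Fin dB) (Fin dA × Fin dB) ℂ,
    Λ.PosSemidef ∧ trSnd Λ = 1 ∧
    (∑ x, T x) = Matrix.of fun i j =>
      Λ (i.1, i.2.1) (j.1, j.2.1) * (if i.2.2 = j.2.2 then (1 : ℂ) else 0)

/-- Outcome probability `Tr[J T]` (as a real number). -/
def prob {dA dB dC : ℕ} (J T : PMat dA dB dC) : ℝ := ((J * T).trace).re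

/-- `P_k`: Bob's optimal winning probability in the quantum roulette with `k` chips,
for the pair of testers `T`, `S`. -/
def rouletteP {dA dB dC m : ℕ} (T S : Fin m → PMat dA dB dC) (k : ℕ) : ℝ :=
  sSup { r : ℝ | ∃ J : PMat dA dB dC, IsProcessComb J ∧
    ∃ G : Finset (Fin 2 × Fin m), G.card = k ∧
      r = ∑ g ∈ G, (1 / 2 : ℝ) * prob J (if g.1 = 0 then T g.2 else S g.2) }

/-- The roulette vector `w ∈ ℝ^{2m}`, `w_k = P_k - P_{k-1}`. -/
def rouletteW {dA dB dC m : ℕ} (T S : Fin m → PMat dA dB dC) : Fin (m + m) → ℝ :=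
  fun k => rouletteP T S (k.1 + 1) - rouletteP T S k.1

/-- Sum of the `k` largest entries of a (nonnegative) vector, padding with zeros. -/
def kMaxSum {n : ℕ} (u : Fin n → ℝ) (k : ℕ) : ℝ :=
  sSup { r : ℝ | ∃ A : Finset (Fin n), A.card = min k n ∧ r = ∑ i ∈ A, u i }

/-- `MajorizedBy u v` means `u ≺ v`: every partial sum of the `k` largest entries of `u`
is at most that of `v`, and the total sums agree. -/
def MajorizedBy {m n : ℕ} (u : Fin m → ℝ) (v : Fin n → ℝ) : Prop :=
  (∀ k : ℕ, kMaxSum u k ≤ kMaxSum v k) ∧ ∑ i, u i = ∑ i, v i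

/-- Base-2 Shannon entropy of a finite vector. -/
def H2 {n : ℕ} (p : Fin n → ℝ) : ℝ := -∑ i, p i * Real.logb 2 (p i)

/-- Rank-one projector `|φ⟩⟨φ|` on a bipartite system. -/
def projMat {d : ℕ} (φ : Fin d × Fin d → ℂ) :
    Matrix (Fin d × Fin d) (Fin d × Fin d) ℂ :=
  Matrix.of fun x y => φ x * (starRingEnd ℂ) (φ y)

/-- Embed an operator on A ⊗ C as an operator on A ⊗ B ⊗ C acting as the identity on B. -/
def embAC {d : ℕ} (M : Matrix (Fin d × Fin d) (Fin d × Fin d) ℂ) : PMat d d d :=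
  Matrix.of fun i j => M (i.1, i.2.2) (j.1, j.2.2) * (if i.2.1 = j.2.1 then (1 : ℂ) else 0)

/-- Embed an operator on B ⊗ C as an operator on A ⊗ B ⊗ C acting as the identity on A. -/
def embBC {d : ℕ} (M : Matrix (Fin d × Fin d) (Fin d × Fin d) ℂ) : PMat d d d :=
  Matrix.of fun i j => M (i.2.1, i.2.2) (j.2.1, j.2.2) * (if i.1 = j.1 then (1 : ℂ) else 0)

/-- `(U ⊗ V) |φ⟩` for a bipartite vector `φ`. -/
def kronVec {d : ℕ} (U V : Matrix (Fin d) (Fin d) ℂ) (φ : Fin d × Fin d → ℂ) :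
    Fin d × Fin d → ℂ :=
  fun x => ∑ y : Fin d × Fin d, U x.1 y.1 * V x.2 y.2 * φ y

/-- An orthonormal basis `{Φ_i}` of `ℂ^d ⊗ ℂ^d` consisting of maximally entangled vectors,
with `Φ_1 = (1/√d) ∑_k |kk⟩`. -/
def IsMaxEntBasis {d : ℕ} (Φ : Fin (d * d) → Fin d × Fin d → ℂ) : Prop :=
  (∀ i j, ∑ x : Fin d × Fin d, (starRingEnd ℂ) (Φ i x) * Φ j x
      = if i = j then (1 : ℂ) else 0) ∧
  (∀ i a a', ∑ b : Fin d, Φ i (a, b) * (starRingEnd ℂ) (Φ i (a', b))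
      = if a = a' then (1 : ℂ) / d else 0) ∧
  (∀ i b b', ∑ a : Fin d, Φ i (a, b) * (starRingEnd ℂ) (Φ i (a, b'))
      = if b = b' then (1 : ℂ) / d else 0) ∧
  ∀ (h : 0 < d * d) (x : Fin d × Fin d),
    Φ ⟨0, h⟩ x = if x.1 = x.2 then ((1 / Real.sqrt d : ℝ) : ℂ) else 0

/-- Outcome distribution of the common-cause indicator `T_CC(U₁, U₂)` on a process comb:
`p_i = (1/d) Tr[J ((U₁⊗U₂)|Φ_i⟩⟨Φ_i|(U₁⊗U₂)†)_{AC} ⊗ I_B]`. -/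
def ccProb {d : ℕ} (U₁ U₂ : Matrix (Fin d) (Fin d) ℂ)
    (Φ : Fin (d * d) → Fin d × Fin d → ℂ) (J : PMat d d d) : Fin (d * d) → ℝ :=
  fun i => (1 / d) * prob J (embAC (projMat (kronVec U₁ U₂ (Φ i))))

/-- Outcome distribution of the direct-cause indicator `T_DC(U₃, U₄)` on a process comb:
`q_i = (1/d) Tr[J (I_A ⊗ ((U₃⊗U₄)|Φ_i⟩⟨Φ_i|(U₃⊗U₄)†)_{BC})]`. -/
def dcProb {d : ℕ} (U₃ U₄ : Matrix (Fin d) (Fin d) ℂ)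
    (Φ : Fin (d * d) → Fin d × Fin d → ℂ) (J : PMat d d d) : Fin (d * d) → ℝ :=
  fun i => (1 / d) * prob J (embBC (projMat (kronVec U₃ U₄ (Φ i))))

/-!
Write `T = |Φ_j⟩⟨Φ_j|_{AC} ⊗ I_B`, a Hermitian projection with `Tr T = d`. The comb condition
gives `Tr J = d`, so outcome `j` has probability one iff `Tr[J (1 - T)] = 0`; since `J` and
`1 - T` are positive semidefinite this forces `J (1 - T) = 0`, i.e. `J = T J T = |Φ_j⟩⟨Φ_j| ⊗ S`
for some `S` on `B`. As `Φ_j` is maximally entangled, `Tr_C J = I_A / d ⊗ S`, and comparing with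
`ρ_A ⊗ I_B` gives `S = I_B`.
-/

namespace Matrix

variable {n 𝕜 : Type*} [Fintype n] [RCLike 𝕜]

open scoped MatrixOrder in
theorem PosSemidef.mul_eq_zero_of_re_trace_mul_eq_zero {A B : Matrix n n 𝕜}
    (hA : A.PosSemidef) (hB : B.PosSemidef) (h : RCLike.re (A * B).trace = 0) : A * B = 0 := by
  classical
  obtain ⟨X, rfl⟩ := CStarAlgebra.nonneg_iff_eq_star_mul_self.mp hA.nonneg
  obtain ⟨Y, rfl⟩ := CStarAlgebra.nonneg_iff_eq_star_mul_self.mp hB.nonneg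
  -- `Tr(XᴴX YᴴY)` is the squared Frobenius norm of `M = Y Xᴴ`.
  set M := Y * star X
  have htr : (star X * X * (star Y * Y)).trace = (Mᴴ * M).trace := by
    have hMM : Mᴴ * M = X * (star Y * Y * star X) := by
      simp [M, star_eq_conjTranspose, conjTranspose_mul, Matrix.mul_assoc]
    rw [hMM, trace_mul_comm X, trace_mul_comm (star X * X)]
    simp only [Matrix.mul_assoc]
  have hM : M = 0 := by
    have hnonneg := (posSemidef_conjTranspose_mul_self M).trace_nonneg
    rw [← trace_conjTranspose_mul_self_eq_zero_iff, ← htr]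
    rw [← htr] at hnonneg
    exact RCLike.ext (by simpa using h) (by simpa using (RCLike.nonneg_iff.mp hnonneg).2)
  have hXY : X * star Y = 0 := by simpa [M, star_mul] using congrArg star hM
  calc star X * X * (star Y * Y) = star X * (X * star Y) * Y := by simp only [Matrix.mul_assoc]
    _ = 0 := by rw [hXY, Matrix.mul_zero, Matrix.zero_mul]

theorem PosSemidef.mul_eq_self_of_re_trace_mul_eq [DecidableEq n] {A P : Matrix n n 𝕜}
    (hA : A.PosSemidef) (hP : P.IsHermitian) (hPP : P * P = P)
    (h : RCLike.re (A * P).trace = RCLike.re A.trace) : A * P = A := by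
  have hQ : (1 - P).PosSemidef := by
    have hsq : (1 - P)ᴴ * (1 - P) = 1 - P := by
      rw [conjTranspose_sub, conjTranspose_one, hP.eq, sub_mul, mul_sub, mul_sub, hPP]
      simp
    exact hsq ▸ posSemidef_conjTranspose_mul_self (1 - P)
  have h0 := hA.mul_eq_zero_of_re_trace_mul_eq_zero hQ (by
    rw [Matrix.mul_sub, Matrix.mul_one, trace_sub, map_sub, h, sub_self])
  rw [Matrix.mul_sub, Matrix.mul_one, sub_eq_zero] at h0
  exact h0.symm

end Matrix

theorem trace_trC {dA dB dC : ℕ} (M : PMat dA dB dC) : (trC M).trace = M.trace := by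
  simp [trC, Matrix.trace, Fintype.sum_prod_type]

theorem IsProcessComb.trace_eq {dA dB dC : ℕ} {J : PMat dA dB dC} (hJ : IsProcessComb J) :
    J.trace = dB := by
  obtain ⟨-, ρ, -, hρ, hJρ⟩ := hJ
  have hρ' : ∑ a, ρ a a = 1 := hρ
  rw [← trace_trC, hJρ]
  simp [Matrix.trace, Fintype.sum_prod_type, ← Finset.mul_sum, hρ']

section AC

variable {d : ℕ}

/-- `M_{AC} ⊗ S_B`. -/
def kronAC (M : Matrix (Fin d × Fin d) (Fin d × Fin d) ℂ) (S : Matrix (Fin d) (Fin d) ℂ) :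
    PMat d d d :=
  Matrix.of fun i k => M (i.1, i.2.2) (k.1, k.2.2) * S i.2.1 k.2.1

/-- The operator `⟨φ|_{AC} M |φ⟩_{AC}` on `B`. -/
def compressAC (φ : Fin d × Fin d → ℂ) (M : PMat d d d) : Matrix (Fin d) (Fin d) ℂ :=
  Matrix.of fun b b' => ∑ x : Fin d × Fin d, ∑ y : Fin d × Fin d,
    star (φ x) * M (x.1, b, x.2) (y.1, b', y.2) * φ y

theorem embAC_eq_kronAC_one (M : Matrix (Fin d × Fin d) (Fin d × Fin d) ℂ) :
    embAC M = kronAC M 1 := by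
  ext i k
  simp [embAC, kronAC, Matrix.one_apply]

theorem embAC_mul (M N : Matrix (Fin d × Fin d) (Fin d × Fin d) ℂ) :
    embAC M * embAC N = embAC (M * N) := by
  ext ⟨a, b, c⟩ ⟨a', b', c'⟩
  simp [embAC, Matrix.mul_apply, Fintype.sum_prod_type]

theorem conjTranspose_embAC (M : Matrix (Fin d × Fin d) (Fin d × Fin d) ℂ) :
    (embAC M)ᴴ = embAC Mᴴ := by
  ext ⟨a, b, c⟩ ⟨a', b', c'⟩
  by_cases hb : b = b' <;> simp [embAC, hb, eq_comm]

theorem trace_embAC (M : Matrix (Fin d × Fin d) (Fin d × Fin d) ℂ) :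
    (embAC M).trace = d * M.trace := by
  simp [embAC, Matrix.trace, Fintype.sum_prod_type, Finset.mul_sum]

theorem kronVec_one_one (φ : Fin d × Fin d → ℂ) : kronVec 1 1 φ = φ := by
  funext x
  simp [kronVec, Matrix.one_apply, Fintype.sum_prod_type]

theorem conjTranspose_projMat (φ : Fin d × Fin d → ℂ) : (projMat φ)ᴴ = projMat φ := by
  ext x y
  simp [projMat, mul_comm]

theorem trace_projMat (φ : Fin d × Fin d → ℂ) : (projMat φ).trace = star φ ⬝ᵥ φ := by
  simp [projMat, Matrix.trace, dotProduct, mul_comm]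

theorem projMat_mul_self {φ : Fin d × Fin d → ℂ} (hφ : star φ ⬝ᵥ φ = 1) :
    projMat φ * projMat φ = projMat φ := by
  ext x y
  simp only [projMat, Matrix.mul_apply, Matrix.of_apply]
  rw [← one_mul (φ x * _), ← hφ, dotProduct, Finset.sum_mul]
  refine Finset.sum_congr rfl fun z _ => ?_
  simp only [Pi.star_apply, Complex.star_def]
  ring

theorem embAC_projMat_mul_mul_embAC_projMat (φ : Fin d × Fin d → ℂ) (M : PMat d d d) :
    embAC (projMat φ) * M * embAC (projMat φ) = kronAC (projMat φ) (compressAC φ M) := by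
  ext ⟨a, b, c⟩ ⟨a', b', c'⟩
  simp only [embAC, kronAC, compressAC, projMat, of_apply, Matrix.mul_apply, Fintype.sum_prod_type,
    mul_ite, ite_mul, mul_one, mul_zero, zero_mul, Finset.sum_ite_irrel, Finset.sum_const_zero,
    Finset.sum_ite_eq, Finset.sum_ite_eq', Finset.mem_univ, ↓reduceIte, Finset.sum_mul,
    Finset.mul_sum, RCLike.star_def]
  -- reorder the summation indices `(z, y)` of `(T M) T` to the `(y, z)` of `compressAC`
  conv_lhs => enter [2, x]; rw [Finset.sum_comm]
  conv_lhs => enter [2, x, 2, y]; rw [Finset.sum_comm]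
  rw [Finset.sum_comm]
  conv_lhs => enter [2, y]; rw [Finset.sum_comm]
  refine Finset.sum_congr rfl fun _ _ => Finset.sum_congr rfl fun _ _ =>
    Finset.sum_congr rfl fun _ _ => Finset.sum_congr rfl fun _ _ => by ring

theorem trC_kronAC_projMat {φ : Fin d × Fin d → ℂ}
    (hφ : ∀ a a', ∑ c, φ (a, c) * starRingEnd ℂ (φ (a', c)) = if a = a' then (1 : ℂ) / d else 0)
    (S : Matrix (Fin d) (Fin d) ℂ) :
    trC (kronAC (projMat φ) S) =
      Matrix.of fun i k => (if i.1 = k.1 then (1 : ℂ) / d else 0) * S i.2 k.2 := by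
  ext ⟨a, b⟩ ⟨a', b'⟩
  simp only [trC, kronAC, projMat, Matrix.of_apply, ← Finset.sum_mul, hφ]

theorem IsProcessComb.eq_one_of_kronAC_projMat {φ : Fin d × Fin d → ℂ}
    (hφ : ∀ a a', ∑ c, φ (a, c) * starRingEnd ℂ (φ (a', c)) = if a = a' then (1 : ℂ) / d else 0)
    {S : Matrix (Fin d) (Fin d) ℂ} (hJ : IsProcessComb (kronAC (projMat φ) S)) : S = 1 := by
  obtain ⟨-, ρ, -, hρ, hJρ⟩ := hJ
  rw [trC_kronAC_projMat hφ] at hJρ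
  ext b b'
  have hd : (d : ℂ) ≠ 0 := Nat.cast_ne_zero.mpr (Fin.pos b).ne'
  have hρ' : ∑ a, ρ a a = 1 := hρ
  have hdiag (a : Fin d) : 1 / d * S b b' = ρ a a * (1 : Matrix (Fin d) (Fin d) ℂ) b b' := by
    simpa [Matrix.one_apply] using congrFun (congrFun hJρ (a, b)) (a, b')
  calc S b b' = ∑ _a : Fin d, 1 / d * S b b' := by
        rw [Finset.sum_const, Finset.card_univ, Fintype.card_fin, nsmul_eq_mul]
        field_simp
    _ = ∑ a, ρ a a * (1 : Matrix (Fin d) (Fin d) ℂ) b b' := Finset.sum_congr rfl fun a _ => hdiag a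
    _ = (1 : Matrix (Fin d) (Fin d) ℂ) b b' := by rw [← Finset.sum_mul, hρ', one_mul]

end AC

theorem common_cause_indicator_eigencircuits_general {d : ℕ}
    (Φ : Fin (d * d) → Fin d × Fin d → ℂ) (hΦ : IsMaxEntBasis Φ)
    (j : Fin (d * d)) (J : PMat d d d) (hJ : IsProcessComb J) :
    ccProb 1 1 Φ J j = 1 ↔ J = embAC (projMat (Φ j)) := by
  have hd : (d : ℝ) ≠ 0 := Nat.cast_ne_zero.mpr (by rintro rfl; exact j.elim0)
  have hprob : ccProb 1 1 Φ J j = 1 ↔ ((J * embAC (projMat (Φ j))).trace).re = d := by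
    simp only [ccProb, prob, kronVec_one_one]
    field_simp
  rw [hprob]
  have hnorm : star (Φ j) ⬝ᵥ Φ j = 1 := by simpa [dotProduct] using hΦ.1 j j
  set T := embAC (projMat (Φ j)) with hT
  have hTH : T.IsHermitian := by rw [IsHermitian, hT, conjTranspose_embAC, conjTranspose_projMat]
  have hTT : T * T = T := by rw [embAC_mul, projMat_mul_self hnorm]
  constructor
  · intro h
    have hJT : J * T = J := hJ.1.mul_eq_self_of_re_trace_mul_eq hTH hTT (by simp [h, hJ.trace_eq])
    have hTJ : T * J = J := by rw [← hTH.eq, ← hJ.1.isHermitian.eq, ← conjTranspose_mul, hJT]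
    have hJS : J = kronAC (projMat (Φ j)) (compressAC (Φ j) J) := by
      rw [← embAC_projMat_mul_mul_embAC_projMat, hTJ, hJT]
    have hS : compressAC (Φ j) J = 1 := by
      rw [hJS] at hJ
      exact hJ.eq_one_of_kronAC_projMat (hΦ.2.1 j)
    rw [hJS, hS, hT, embAC_eq_kronAC_one]
  · rintro rfl
    rw [hTT, hT, trace_embAC, trace_projMat, hnorm]
    simp

/-- eigencircuits of the maximal common-cause indicator: a process comb
`J` gives outcome `j` with probability one under the common-cause indicator (with
identity unitaries) iff `J = |Φ_j⟩⟨Φ_j|_{AC} ⊗ I_B`. -/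
theorem common_cause_indicator_eigencircuits {d : ℕ} (hd : 2 ≤ d)
    (Φ : Fin (d * d) → Fin d × Fin d → ℂ) (hΦ : IsMaxEntBasis Φ)
    (j : Fin (d * d)) (J : PMat d d d) (hJ : IsProcessComb J) :
    ccProb 1 1 Φ J j = 1 ↔ J = embAC (projMat (Φ j)) :=
  common_cause_indicator_eigencircuits_general Φ hΦ j J hJ
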